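/- arXiv:2202.07069 — 3 statements merged into one kernel-verified Lean document; each statement's English description precedes it below -/
import Mathlib

section
/- Let V be a commutative unital quantale, (X,a) a V-category, κ a type, and f : X → (κ → V) a function. The following are equivalent: (1) f is a V-functor (X,a) → V^κ, i.e. a x y ≤ ⨅ᵢ hom (f x i) (f y i) for all x,y; (2) for all x ∈ X and i ∈ κ, ⨆_z (f z i ⊗ a z x) = f x i; (3) for all x ∈ X and i ∈ κ, ⨆_z (f z i ⊗ a z x) ≤ f x i (i.e. the transpose f♭ given by f♭ i x = f x i is a V-distributor from the discrete V-category on κ to (X,a)). -/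
universe u v w

open CategoryTheory

/-- `V` is a (commutative unital) quantale: the tensor distributes over suprema. -/
def QuantaleLaw (V : Type u) [CompleteLattice V] [CommMonoid V] : Prop :=
  ∀ (u : V) (s : Set V), u * sSup s = ⨆ v ∈ s, u * v

/-- Internal hom of the quantale: `hom u w = ⨆ {v | u ⊗ v ≤ w}`. -/
def qhom {V : Type u} [CompleteLattice V] [CommMonoid V] (u w : V) : V :=
  sSup {v | u * v ≤ w}

/-- `a` is a `V`-category structure on `X`. -/
def IsVCat {V : Type u} [CompleteLattice V] [CommMonoid V] {X : Type v}
    (a : X → X → V) : Prop :=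
  (∀ x, (1 : V) ≤ a x x) ∧ ∀ x y z, a x y * a y z ≤ a x z

/-- `f` is a `V`-functor from `(X,a)` to `(Y,b)`. -/
def IsVFunctor {V : Type u} [CompleteLattice V] {X : Type v} {Y : Type w}
    (a : X → X → V) (b : Y → Y → V) (f : X → Y) : Prop :=
  ∀ x y, a x y ≤ b (f x) (f y)

/-- `f` is an initial `V`-functor from `(X,a)` to `(Y,b)`. -/
def IsInitialVFunctor {V : Type u} {X : Type v} {Y : Type w}
    (a : X → X → V) (b : Y → Y → V) (f : X → Y) : Prop :=
  ∀ x y, a x y = b (f x) (f y)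

/-- The `V`-category structure of the power `V^κ`. -/
def powStr {V : Type u} [CompleteLattice V] [CommMonoid V] (κ : Type v)
    (p q : κ → V) : V :=
  ⨅ i, qhom (p i) (q i)

/-- The graph of a function, as a `V`-relation: `k` on the graph, `⊥` elsewhere. -/
def fnGraph {V : Type u} [CompleteLattice V] [CommMonoid V] {X : Type v} {Y : Type w}
    (f : X → Y) : X → Y → V :=
  fun x y => ⨆ _ : f x = y, (1 : V)

/-- A lifting of a `Set`-functor `F` to `V`-Cat. -/
structure Lifting (V : Type u) [CompleteLattice V] [CommMonoid V]
    (F : Type u ⥤ Type u) where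
  str : ∀ {X : Type u}, (X → X → V) → F.obj X → F.obj X → V
  isVCat : ∀ {X : Type u} (a : X → X → V), IsVCat a → IsVCat (str a)
  map : ∀ {X Y : Type u} (a : X → X → V) (b : Y → Y → V) (f : X → Y),
    IsVCat a → IsVCat b → IsVFunctor a b f →
    IsVFunctor (str a) (str b) (F.map (TypeCat.ofHom f))

/-- A `κ`-ary `V`-valued predicate lifting for a `Set`-functor `F`. -/
structure PredLifting (V : Type u) [CompleteLattice V] [CommMonoid V]
    (F : Type u ⥤ Type u) (κ : Type u) where
  app : ∀ {X : Type u}, (X → κ → V) → F.obj X → V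
  natural : ∀ {X Y : Type u} (f : X → Y) (p : Y → κ → V) (t : F.obj X),
    app (fun x => p (f x)) t = app p (F.map (TypeCat.ofHom f) t)

/-- A predicate lifting is monotone if it preserves the pointwise order of predicates. -/
def PredLifting.Mono {V : Type u} [CompleteLattice V] [CommMonoid V]
    {F : Type u ⥤ Type u} {κ : Type u} (lam : PredLifting V F κ) : Prop :=
  ∀ (X : Type u) (p q : X → κ → V), (∀ x i, p x i ≤ q x i) →
    ∀ t, lam.app p t ≤ lam.app q t

/-- A predicate lifting is compatible with a lifting `L` if it lifts `V`-functorial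
predicates to `V`-functorial predicates. -/
def Compatible {V : Type u} [CompleteLattice V] [CommMonoid V] {F : Type u ⥤ Type u}
    (L : Lifting V F) {κ : Type u} (lam : PredLifting V F κ) : Prop :=
  ∀ (X : Type u) (a : X → X → V), IsVCat a → ∀ f : X → κ → V,
    IsVFunctor a (powStr κ) f → IsVFunctor (L.str a) qhom (lam.app f)

/-- The Kantorovich `V`-category structure on `F.obj X` induced by a family of
predicate liftings. -/
noncomputable def kantStr {V : Type u} [CompleteLattice V] [CommMonoid V]
    {F : Type u ⥤ Type u} {ι : Type v} {κ : ι → Type u}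
    (Λ : ∀ l, PredLifting V F (κ l)) {X : Type u} (a : X → X → V)
    (t s : F.obj X) : V :=
  ⨅ l, ⨅ f : {f : X → κ l → V // IsVFunctor a (powStr (κ l)) f},
    qhom ((Λ l).app f.1 t) ((Λ l).app f.1 s)

/-- A generalized predicate lifting for `(F, L)` with parameter `V`-category `(A, α)`. -/
structure GenPredLifting (V : Type u) [CompleteLattice V] [CommMonoid V]
    (F : Type u ⥤ Type u) (L : Lifting V F) (A : Type u) (α : A → A → V) where
  app : ∀ {Z : Type u}, (Z → Z → V) → (Z → A) → F.obj Z → V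
  isVFunctor : ∀ {Z : Type u} (c : Z → Z → V), IsVCat c → ∀ f : Z → A,
    IsVFunctor c α f → IsVFunctor (L.str c) qhom (app c f)
  natural : ∀ {Z Z' : Type u} (c : Z → Z → V) (c' : Z' → Z' → V),
    IsVCat c → IsVCat c' → ∀ (u : Z → Z'), IsVFunctor c c' u →
    ∀ (g : Z' → A), IsVFunctor c' α g →
    ∀ t : F.obj Z, app c (fun z => g (u z)) t = app c' g (F.map (TypeCat.ofHom u) t)

/-- A lax extension of a `Set`-functor `F` to `V`-Rel. -/
structure LaxExt (V : Type u) [CompleteLattice V] [CommMonoid V]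
    (F : Type u ⥤ Type u) where
  ext : ∀ {X Y : Type u}, (X → Y → V) → F.obj X → F.obj Y → V
  mono : ∀ {X Y : Type u} (r r' : X → Y → V), (∀ x y, r x y ≤ r' x y) →
    ∀ t s, ext r t s ≤ ext r' t s
  comp : ∀ {X Y Z : Type u} (r : X → Y → V) (s : Y → Z → V)
    (t : F.obj X) (w : F.obj Z),
    (⨆ u : F.obj Y, ext r t u * ext s u w) ≤
      ext (fun x z => ⨆ y, r x y * s y z) t w
  lax_map : ∀ {X Y : Type u} (f : X → Y) (t : F.obj X),
    (1 : V) ≤ ext (fnGraph f) t (F.map (TypeCat.ofHom f) t)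
  lax_map_op : ∀ {X Y : Type u} (f : X → Y) (t : F.obj X),
    (1 : V) ≤ ext (fun y x => fnGraph f x y) (F.map (TypeCat.ofHom f) t) t

/-! The adjunction `u ⊗ - ⊣ hom(u, -)` turns `a x y ≤ hom(f x i, f y i)` into
`f x i ⊗ a x y ≤ f y i`, and taking the supremum over `x` gives (3). Reflexivity
`k ≤ a x x` supplies the reverse inequality that upgrades (3) to (2). -/

section Quantale

variable {V : Type u} [CompleteLattice V] [CommMonoid V]

theorem QuantaleLaw.mul_le_mul_left (hV : QuantaleLaw V) (u : V) {v w : V} (h : v ≤ w) :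
    u * v ≤ u * w := by
  rw [← sup_eq_right.mpr h, ← sSup_pair, hV]
  exact le_iSup₂_of_le v (Set.mem_insert v {w}) le_rfl

theorem QuantaleLaw.mul_le_iff_le_qhom (hV : QuantaleLaw V) {u v w : V} :
    u * v ≤ w ↔ v ≤ qhom u w := by
  refine ⟨fun h => le_sSup h, fun h => (hV.mul_le_mul_left u h).trans ?_⟩
  rw [qhom, hV u]
  exact iSup₂_le fun _ hv => hv

theorem isVFunctor_powStr_iff (hV : QuantaleLaw V) {X κ : Type*} (a : X → X → V)
    (f : X → κ → V) :
    IsVFunctor a (powStr κ) f ↔ ∀ x i, (⨆ z, f z i * a z x) ≤ f x i := by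
  constructor
  · intro hf x i
    exact iSup_le fun z => hV.mul_le_iff_le_qhom.mpr ((hf z x).trans (iInf_le _ i))
  · intro hf x y
    exact le_iInf fun i =>
      hV.mul_le_iff_le_qhom.mp ((le_iSup (fun z => f z i * a z y) x).trans (hf y i))

theorem le_iSup_mul_of_one_le (hV : QuantaleLaw V) {X : Type*} {a : X → X → V}
    (ha : ∀ x, 1 ≤ a x x) (g : X → V) (x : X) : g x ≤ ⨆ z, g z * a z x :=
  calc g x = g x * 1 := (mul_one _).symm
    _ ≤ g x * a x x := hV.mul_le_mul_left _ (ha x)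
    _ ≤ ⨆ z, g z * a z x := le_iSup (fun z => g z * a z x) x

end Quantale

/-- characterizations of `V`-functors into powers of `V`
(`f` is a `V`-functor iff its transpose is a `V`-distributor). -/
theorem stmt_2 {V : Type u} [CompleteLattice V] [CommMonoid V] (hV : QuantaleLaw V)
    {X κ : Type u} (a : X → X → V) (ha : IsVCat a) (f : X → κ → V) :
    (IsVFunctor a (powStr κ) f ↔ ∀ x i, (⨆ z, f z i * a z x) = f x i) ∧
    (IsVFunctor a (powStr κ) f ↔ ∀ x i, (⨆ z, f z i * a z x) ≤ f x i) := by
  have key := isVFunctor_powStr_iff hV a f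
  refine ⟨key.trans ⟨fun h x i => ?_, fun h x i => (h x i).le⟩, key⟩
  exact le_antisymm (h x i) (le_iSup_mul_of_one_le hV ha.1 (fun z => f z i) x)
end

section
/- Let V be a commutative unital quantale, F : Type u ⥤ Type u a functor, and Λ a family of predicate liftings for F, where λ ∈ Λ has arity κ_λ : Type u. If i : (X,a) → (Y,b) is an initial V-functor, then for all 𝔵,𝔶 ∈ F.obj X, F^Λ a 𝔵 𝔶 = F^Λ b (F.map i 𝔵) (F.map i 𝔶). (Every Kantorovich lifting preserves initial morphisms.) -/
universe u v w

open CategoryTheory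

/-!
Restricting a `b`-functorial predicate along `i` gives an `a`-functorial one, so the
Kantorovich structure can only grow along `i`. Conversely, an `a`-functorial predicate `f`
extends to the `b`-functorial predicate `y ↦ ⨆ₓ b (i x) y ⊗ f x` (a left Kan extension along
`i`), and initiality of `i` makes this extension restrict back to `f`; naturality of the
predicate liftings then transports every term of the infimum defining `F^Λ a` to one of
`F^Λ b`.
-/

namespace QuantaleLaw

variable {V : Type u} [CompleteLattice V] [CommMonoid V]

lemma mul_iSup (hV : QuantaleLaw V) {ι : Sort*} (c : V) (s : ι → V) :
    c * ⨆ i, s i = ⨆ i, c * s i := by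
  rw [iSup, hV c (Set.range s), iSup_range]

lemma mul_le_mul_left_s6 (hV : QuantaleLaw V) {c d e : V} (h : d ≤ e) : c * d ≤ c * e := by
  have hsup : c * (d ⊔ e) = c * d ⊔ c * e := by
    simpa [iSup_bool_eq] using hV.mul_iSup c (fun p : Bool => if p then d else e)
  calc c * d ≤ c * d ⊔ c * e := le_sup_left
    _ = c * e := by rw [← hsup, sup_eq_right.2 h]

lemma mul_le_mul_right (hV : QuantaleLaw V) {c d e : V} (h : d ≤ e) : d * c ≤ e * c := by
  simpa only [mul_comm _ c] using hV.mul_le_mul_left_s6 h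

lemma le_qhom_iff (hV : QuantaleLaw V) {c d e : V} : d ≤ qhom c e ↔ c * d ≤ e := by
  refine ⟨fun h => ?_, fun h => le_sSup h⟩
  calc c * d ≤ c * qhom c e := hV.mul_le_mul_left_s6 h
    _ = ⨆ x ∈ {x | c * x ≤ e}, c * x := by rw [qhom, hV]
    _ ≤ e := iSup₂_le fun _ hx => hx

lemma isVFunctor_powStr_iff (hV : QuantaleLaw V) {X : Type w} {κ : Type v} {a : X → X → V}
    {f : X → κ → V} :
    IsVFunctor a (powStr κ) f ↔ ∀ x y j, a x y * f x j ≤ f y j := by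
  simp only [IsVFunctor, powStr, le_iInf_iff, hV.le_qhom_iff, mul_comm (a _ _)]

end QuantaleLaw

section VFunctor

variable {V : Type u} [CompleteLattice V] {X : Type v} {Y : Type w} {Z : Type*}

lemma IsInitialVFunctor.isVFunctor {a : X → X → V} {b : Y → Y → V} {i : X → Y}
    (hi : IsInitialVFunctor a b i) : IsVFunctor a b i :=
  fun x y => (hi x y).le

lemma IsVFunctor.comp {a : X → X → V} {b : Y → Y → V} {c : Z → Z → V} {i : X → Y}
    {g : Y → Z} (hg : IsVFunctor b c g) (hi : IsVFunctor a b i) :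
    IsVFunctor a c (g ∘ i) :=
  fun x y => (hi x y).trans (hg (i x) (i y))

end VFunctor

section LeftKanExtension

variable {V : Type u} [CompleteLattice V] [CommMonoid V] {X : Type w} {Y : Type*} {κ : Type v}

def leftKanExt (b : Y → Y → V) (i : X → Y) (f : X → κ → V) : Y → κ → V :=
  fun y j => ⨆ x, b (i x) y * f x j

lemma isVFunctor_leftKanExt (hV : QuantaleLaw V) {b : Y → Y → V} (i : X → Y)
    (f : X → κ → V) (hb : ∀ x y z, b x y * b y z ≤ b x z) :
    IsVFunctor b (powStr κ) (leftKanExt b i f) := by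
  refine hV.isVFunctor_powStr_iff.2 fun y y' j => ?_
  rw [leftKanExt, hV.mul_iSup]
  refine iSup_le fun x => le_iSup_of_le x ?_
  calc b y y' * (b (i x) y * f x j) = b (i x) y * b y y' * f x j := by ac_rfl
    _ ≤ b (i x) y' * f x j := hV.mul_le_mul_right (hb _ _ _)

lemma leftKanExt_apply_of_isInitial (hV : QuantaleLaw V) {a : X → X → V} {b : Y → Y → V}
    {i : X → Y} {f : X → κ → V} (hi : IsInitialVFunctor a b i)
    (hb : ∀ y, 1 ≤ b y y) (hf : IsVFunctor a (powStr κ) f) (x : X) :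
    leftKanExt b i f (i x) = f x := by
  funext j
  refine le_antisymm (iSup_le fun x' => ?_) (le_iSup_of_le x ?_)
  · rw [← hi]
    exact hV.isVFunctor_powStr_iff.1 hf x' x j
  · calc f x j = 1 * f x j := (one_mul _).symm
      _ ≤ b (i x) (i x) * f x j := hV.mul_le_mul_right (hb _)

end LeftKanExtension

section Kantorovich

variable {V : Type u} [CompleteLattice V] [CommMonoid V] {F : Type u ⥤ Type u}
  {ι : Type v} {κ : ι → Type u} (Λ : ∀ l, PredLifting V F (κ l))
  {X Y : Type u} {a : X → X → V} {b : Y → Y → V} {i : X → Y}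

lemma isVFunctor_kantStr_map (hi : IsVFunctor a b i) :
    IsVFunctor (kantStr Λ a) (kantStr Λ b) (F.map (TypeCat.ofHom i)) := by
  intro t s
  refine le_iInf₂ fun l g => iInf₂_le_of_le l ⟨g.1 ∘ i, g.2.comp hi⟩ ?_
  rw [← (Λ l).natural, ← (Λ l).natural]
  exact le_rfl

lemma kantStr_map_le_of_isInitial (hV : QuantaleLaw V) (hb : IsVCat b)
    (hi : IsInitialVFunctor a b i) (t s : F.obj X) :
    kantStr Λ b (F.map (TypeCat.ofHom i) t) (F.map (TypeCat.ofHom i) s) ≤ kantStr Λ a t s := by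
  refine le_iInf₂ fun l f => iInf₂_le_of_le l ⟨_, isVFunctor_leftKanExt hV i f.1 hb.2⟩ ?_
  simp_rw [← (Λ l).natural, leftKanExt_apply_of_isInitial hV hi hb.1 f.2]
  exact le_rfl

end Kantorovich

theorem stmt_6_general {V : Type u} [CompleteLattice V] [CommMonoid V] (hV : QuantaleLaw V)
    {F : Type u ⥤ Type u} {ι : Type v} {κ : ι → Type u}
    (Λ : ∀ l, PredLifting V F (κ l))
    {X Y : Type u} (a : X → X → V) (b : Y → Y → V) (hb : IsVCat b)
    (i : X → Y) (hi : IsInitialVFunctor a b i) (t s : F.obj X) :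
    kantStr Λ a t s = kantStr Λ b (F.map (TypeCat.ofHom i) t) (F.map (TypeCat.ofHom i) s) :=
  le_antisymm (isVFunctor_kantStr_map Λ hi.isVFunctor t s)
    (kantStr_map_le_of_isInitial Λ hV hb hi t s)

/-- every Kantorovich lifting preserves initial morphisms. -/
theorem stmt_6 {V : Type u} [CompleteLattice V] [CommMonoid V] (hV : QuantaleLaw V)
    {F : Type u ⥤ Type u} {ι : Type v} {κ : ι → Type u}
    (Λ : ∀ l, PredLifting V F (κ l))
    {X Y : Type u} (a : X → X → V) (b : Y → Y → V) (ha : IsVCat a) (hb : IsVCat b)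
    (i : X → Y) (hi : IsInitialVFunctor a b i) (t s : F.obj X) :
    kantStr Λ a t s = kantStr Λ b (F.map (TypeCat.ofHom i) t) (F.map (TypeCat.ofHom i) s) :=
  stmt_6_general hV Λ a b hb i hi t s
end

section
/- Let V be a commutative unital quantale, F : Type u ⥤ Type u a functor, L a lifting of F to V-Cat that preserves initial morphisms, and E a lax extension of F to V-Rel. For a V-relation r : X → Y → V and p : X → κ → V define (r⋆p) y i = ⨆_x (p x i ⊗ r x y). Then the following are equivalent: (i) for all X, Y : Type u, all r : X → Y → V, and all 𝔵 ∈ F.obj X, 𝔶 ∈ F.obj Y, the infimum over all types κ : Type u, all monotone κ-ary predicate liftings λ for F compatible with L, and all p : X → κ → V, of hom (λ_X p 𝔵) (λ_Y (r⋆p) 𝔶), is ≤ E r 𝔵 𝔶; (ii) for every V-category (X,a) and all 𝔵,𝔶 ∈ F.obj X, L a 𝔵 𝔶 ≤ E a 𝔵 𝔶. (Adjunction between taking Kantorovich extensions of compatible monotone predicate liftings and inducing liftings from lax extensions.) -/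
universe u v w

open CategoryTheory

/-
(i) ⇒ (ii): for a `V`-category `(X,a)` and any predicate `p`, the predicate `a ⋆ p`
is a `V`-functor into `V^κ` lying above `p`, so monotonicity and compatibility of `λ` give
`λ p 𝔵 ⊗ L a 𝔵 𝔶 ≤ λ (a ⋆ p) 𝔵 ⊗ L a 𝔵 𝔶 ≤ λ (a ⋆ p) 𝔶`, i.e. `L a` is below every term of the
Kantorovich infimum. (ii) ⇒ (i): every `𝔷 : F.obj κ` yields the evaluation predicate lifting
`p ↦ E p° 𝔷`, natural by the laws (L2), (L3), monotone by (L1), and compatible with `L` once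
`L ≤ E` on `V`-categories, by (L2). Choosing `κ = X`, `𝔷 = 𝔵` and `p` the diagonal, the
corresponding term of the infimum is `hom (E id_* 𝔵 𝔵) (E r 𝔵 𝔶)`, which is `≤ E r 𝔵 𝔶`
because `k ≤ E id_* 𝔵 𝔵` by (L3).
-/

theorem QuantaleLaw.isQuantale {V : Type u} [CompleteLattice V] [CommMonoid V]
    (hV : QuantaleLaw V) : IsQuantale V where
  mul_sSup_distrib := hV
  sSup_mul_distrib s y := by simpa only [mul_comm _ y] using hV y s

section Quantale

variable {V : Type u} [CompleteLattice V] [CommMonoid V] [IsQuantale V]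

theorem le_qhom_iff {u v w : V} : v ≤ qhom u w ↔ u * v ≤ w :=
  Quantale.rightMulResiduation_le_iff_mul_le

theorem qhom_le_of_one_le {u : V} (hu : 1 ≤ u) (w : V) : qhom u w ≤ w :=
  calc qhom u w = 1 * qhom u w := (one_mul _).symm
    _ ≤ u * qhom u w := mul_le_mul_left hu _
    _ ≤ w := le_qhom_iff.mp le_rfl

theorem mul_fnGraph {X : Type v} {Y : Type w} (c : V) (f : X → Y) (x : X) (y : Y) :
    c * fnGraph f x y = ⨆ _ : f x = y, c := by
  by_cases h : f x = y <;> simp [fnGraph, h]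

end Quantale

section PushPred

variable {V : Type u} [CompleteLattice V] [CommMonoid V] {X : Type v} {Y : Type w} {κ : Type u}

def pushPred (r : X → Y → V) (p : X → κ → V) : Y → κ → V :=
  fun y i => ⨆ x, p x i * r x y

variable [IsQuantale V]

theorem le_pushPred {a : X → X → V} (ha : IsVCat a) (p : X → κ → V) (x : X) (i : κ) :
    p x i ≤ pushPred a p x i :=
  calc p x i = p x i * 1 := (mul_one _).symm
    _ ≤ p x i * a x x := mul_le_mul_right (ha.1 x) _
    _ ≤ pushPred a p x i := le_iSup_of_le x le_rfl

theorem isVFunctor_pushPred {a : X → X → V} (ha : IsVCat a) (p : X → κ → V) :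
    IsVFunctor a (powStr κ) (pushPred a p) := by
  intro y z
  refine le_iInf fun i => le_qhom_iff.mpr ?_
  rw [pushPred, Quantale.iSup_mul_distrib]
  refine iSup_le fun x => ?_
  calc p x i * a x y * a y z ≤ p x i * a x z := by
        rw [mul_assoc]
        exact mul_le_mul_right (ha.2 x y z) _
    _ ≤ pushPred a p z i := le_iSup_of_le x le_rfl

theorem pushPred_fnGraph_id {X : Type u} (r : X → Y → V) :
    pushPred r (fun x i => fnGraph id i x) = fun y i => r i y := by
  funext y i
  simp only [pushPred, mul_comm _ (r _ y), mul_fnGraph, id, iSup_iSup_eq_right]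

end PushPred

section Lifting

variable {V : Type u} [CompleteLattice V] [CommMonoid V] [IsQuantale V] {F : Type u ⥤ Type u}

theorem Compatible.str_le_qhom_pushPred {L : Lifting V F} {κ : Type u} {lam : PredLifting V F κ}
    (hmono : lam.Mono) (hcomp : Compatible L lam) {X : Type u} {a : X → X → V} (ha : IsVCat a)
    (p : X → κ → V) (t s : F.obj X) :
    L.str a t s ≤ qhom (lam.app p t) (lam.app (pushPred a p) s) := by
  refine le_qhom_iff.mpr ?_
  calc lam.app p t * L.str a t s ≤ lam.app (pushPred a p) t * L.str a t s :=
        mul_le_mul_left (hmono X _ _ (le_pushPred ha p) t) _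
    _ ≤ lam.app (pushPred a p) s :=
        le_qhom_iff.mp (hcomp X a ha _ (isVFunctor_pushPred ha p) t s)

end Lifting

namespace LaxExt

variable {V : Type u} [CompleteLattice V] [CommMonoid V] {F : Type u ⥤ Type u} (E : LaxExt V F)

theorem mul_le_ext_comp {X Y Z : Type u} {r : X → Y → V} {s : Y → Z → V} (t : F.obj X)
    (u : F.obj Y) (w : F.obj Z) :
    E.ext r t u * E.ext s u w ≤ E.ext (fun x z => ⨆ y, r x y * s y z) t w :=
  le_trans (le_iSup_of_le u le_rfl) (E.comp r s t w)

theorem one_le_ext_fnGraph_id {X : Type u} (t : F.obj X) : 1 ≤ E.ext (fnGraph id) t t := by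
  have hid : F.map (TypeCat.ofHom (id : X → X)) t = t := by
    rw [show TypeCat.ofHom (id : X → X) = 𝟙 X from rfl, F.map_id]
    rfl
  simpa only [hid] using E.lax_map id t

variable [IsQuantale V]

theorem ext_le_ext_comp_of_one_le {X Y Z : Type u} {r : X → Y → V} {s : Y → Z → V}
    {t : F.obj X} {u : F.obj Y} {w : F.obj Z} (h : 1 ≤ E.ext s u w) :
    E.ext r t u ≤ E.ext (fun x z => ⨆ y, r x y * s y z) t w :=
  calc E.ext r t u = E.ext r t u * 1 := (mul_one _).symm
    _ ≤ E.ext r t u * E.ext s u w := mul_le_mul_right h _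
    _ ≤ _ := E.mul_le_ext_comp t u w

noncomputable def evalLift {κ : Type u} (z : F.obj κ) : PredLifting V F κ where
  app p t := E.ext (fun i x => p x i) z t
  natural {X Y} f p t := by
    apply le_antisymm
    · refine (E.ext_le_ext_comp_of_one_le (E.lax_map f t)).trans
        (E.mono _ _ (fun i y => iSup_le fun x => ?_) _ _)
      rw [mul_fnGraph]
      exact iSup_le fun h => h ▸ le_rfl
    · refine (E.ext_le_ext_comp_of_one_le (E.lax_map_op f t)).trans
        (E.mono _ _ (fun i x => iSup_le fun y => ?_) _ _)
      rw [mul_fnGraph]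
      exact iSup_le fun h => h ▸ le_rfl

theorem evalLift_mono {κ : Type u} (z : F.obj κ) : (E.evalLift z).Mono :=
  fun _ _ _ hpq t => E.mono _ _ (fun i x => hpq x i) _ t

theorem evalLift_compatible {L : Lifting V F}
    (hLE : ∀ (X : Type u) (a : X → X → V), IsVCat a → ∀ t s, L.str a t s ≤ E.ext a t s)
    {κ : Type u} (z : F.obj κ) : Compatible L (E.evalLift z) := by
  intro X a ha f hf t s
  refine le_qhom_iff.mpr ?_
  calc E.ext (fun i x => f x i) z t * L.str a t s
      ≤ E.ext (fun i x => f x i) z t * E.ext a t s := mul_le_mul_right (hLE X a ha t s) _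
    _ ≤ E.ext (fun i y => ⨆ x, f x i * a x y) z s := E.mul_le_ext_comp z t s
    _ ≤ E.ext (fun i x => f x i) z s :=
        E.mono _ _ (fun i y => iSup_le fun x =>
          le_qhom_iff.mp ((hf x y).trans (iInf_le _ i))) _ _

theorem evalLift_qhom_pushPred_le {X Y : Type u} (r : X → Y → V) (t : F.obj X) (s : F.obj Y) :
    qhom ((E.evalLift t).app (fun x i => fnGraph id i x) t)
      ((E.evalLift t).app (pushPred r fun x i => fnGraph id i x) s) ≤ E.ext r t s := by
  rw [pushPred_fnGraph_id]
  exact qhom_le_of_one_le (E.one_le_ext_fnGraph_id t) _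

end LaxExt

theorem stmt_13_general {V : Type u} [CompleteLattice V] [CommMonoid V] (hV : QuantaleLaw V)
    {F : Type u ⥤ Type u} (L : Lifting V F)
    (E : LaxExt V F) :
    (∀ (X Y : Type u) (r : X → Y → V) (t : F.obj X) (s : F.obj Y),
        (⨅ (κ : Type u)
          (lam : {lam : PredLifting V F κ // lam.Mono ∧ Compatible L lam})
          (p : X → κ → V),
          qhom (lam.1.app p t) (lam.1.app (fun y i => ⨆ x, p x i * r x y) s))
        ≤ E.ext r t s) ↔
    (∀ (X : Type u) (a : X → X → V), IsVCat a →
        ∀ t s : F.obj X, L.str a t s ≤ E.ext a t s) := by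
  have := hV.isQuantale
  constructor
  · intro hkant X a ha t s
    refine le_trans (le_iInf fun κ => le_iInf fun lam => le_iInf fun p => ?_) (hkant X X a t s)
    exact Compatible.str_le_qhom_pushPred lam.2.1 lam.2.2 ha p t s
  · intro hLE X Y r t s
    let lam : {lam : PredLifting V F X // lam.Mono ∧ Compatible L lam} :=
      ⟨E.evalLift t, E.evalLift_mono t, E.evalLift_compatible hLE t⟩
    exact (iInf_le_of_le X <| iInf_le_of_le lam <| iInf_le _ fun x i => fnGraph id i x).trans
      (E.evalLift_qhom_pushPred_le r t s)

/-- adjunction between taking Kantorovich extensions of the compatible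
monotone predicate liftings and inducing liftings from lax extensions:
`\widehat{F}^{MP(L)} ≤ E` iff `L ≤ I(E)`. -/
theorem stmt_13 {V : Type u} [CompleteLattice V] [CommMonoid V] (hV : QuantaleLaw V)
    {F : Type u ⥤ Type u} (L : Lifting V F)
    (hpres : ∀ {X Y : Type u} (a : X → X → V) (b : Y → Y → V) (f : X → Y),
      IsVCat a → IsVCat b → IsInitialVFunctor a b f →
      IsInitialVFunctor (L.str a) (L.str b) (F.map (TypeCat.ofHom f)))
    (E : LaxExt V F) :
    (∀ (X Y : Type u) (r : X → Y → V) (t : F.obj X) (s : F.obj Y),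
        (⨅ (κ : Type u)
          (lam : {lam : PredLifting V F κ // lam.Mono ∧ Compatible L lam})
          (p : X → κ → V),
          qhom (lam.1.app p t) (lam.1.app (fun y i => ⨆ x, p x i * r x y) s))
        ≤ E.ext r t s) ↔
    (∀ (X : Type u) (a : X → X → V), IsVCat a →
        ∀ t s : F.obj X, L.str a t s ≤ E.ext a t s) :=
  stmt_13_general hV L E
end
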